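/- Let R > 0 and let d : ℝ → ℝ be a C² function satisfying d(ψ + π/2) = π/2 − d(ψ) for all ψ. Set h = R·(sin ∘ d), and define U(ψ) = −h(ψ)·h′(ψ)²·(h(ψ) + h″(ψ))·(d(ψ)/2 − sin(2·d(ψ))/4) + (h″(ψ)·h(ψ)² + 3·h(ψ)·h′(ψ)²)·(h(ψ) + h″(ψ))·(d(ψ)/8 − sin(4·d(ψ))/32), and W(ψ) = −(π·R⁴/32)·sin²(2·d(ψ))·d′(ψ)² + (π·R⁴/192)·(3 − cos(4·d(ψ)))·d′(ψ)⁴ + (π·R⁴/128)·sin²(2·d(ψ))·d″(ψ)². Then ∫₀^π U(ψ) dψ = ∫₀^π W(ψ) dψ. -/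

import Mathlib

open Real Function

/-!
Write `x = d ψ`, `p = d' ψ`, `q = d'' ψ`. The symmetry `d (ψ + π/2) = π/2 - d ψ` makes `d`
`π`-periodic and sends `(x, p, q)` to `(π/2 - x, -p, -q)`, so `∫₀^π U = ½ ∫₀^π (U ψ + U (ψ + π/2))`.
A trigonometric identity gives `U ψ + U (ψ + π/2) = 2 W ψ + 2 G' ψ` with
`G = R⁴ (p A(x) + p³ B(x))`; since `G` is `π`-periodic, `∫₀^π G' = 0`.
-/

section
variable {𝕜 F : Type*} [NontriviallyNormedField 𝕜] [NormedAddCommGroup F] [NormedSpace 𝕜 F]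
  {f : 𝕜 → F} {c : 𝕜}

theorem Function.Periodic.deriv (h : Periodic f c) : Periodic (deriv f) c := fun x => by
  rw [← deriv_comp_add_const, h.funext]

theorem Function.Antiperiodic.deriv (h : Antiperiodic f c) : Antiperiodic (deriv f) c := fun x => by
  rw [← deriv_comp_add_const, h.funext, deriv.neg']

theorem antiperiodic_deriv_of_add_eq_sub {a : F} (h : ∀ x, f (x + c) = a - f x) :
    Antiperiodic (deriv f) c := fun x => by
  rw [← deriv_comp_add_const, funext h, deriv_const_sub]

end

theorem Function.Periodic.integral_deriv_eq_zero {E : Type*} [NormedAddCommGroup E]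
    [NormedSpace ℝ E] [CompleteSpace E] {G g : ℝ → E} {T : ℝ} (hG : Periodic G T)
    (hderiv : ∀ x, HasDerivAt G (g x) x) (hg : Continuous g) (t : ℝ) :
    ∫ x in t..t + T, g x = 0 := by
  rw [intervalIntegral.integral_eq_sub_of_hasDerivAt (fun x _ => hderiv x)
    (hg.intervalIntegrable _ _), hG t, sub_self]

theorem Function.Periodic.integral_eq_of_add_shift_eq {U W g : ℝ → ℝ} {T a : ℝ}
    (hper : Periodic U T) (hU : Continuous U) (hW : Continuous W)
    (hsym : ∀ x, U x + U (x + a) = 2 * W x + 2 * g x) (hg0 : ∫ x in 0..T, g x = 0) :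
    ∫ x in 0..T, U x = ∫ x in 0..T, W x := by
  have hg : Continuous g := by
    rw [show g = fun x => (U x + U (x + a)) / 2 - W x from funext fun x => by rw [hsym]; ring]
    fun_prop
  have hshift : ∫ x in 0..T, U (x + a) = ∫ x in 0..T, U x := by
    rw [intervalIntegral.integral_comp_add_right, zero_add, add_comm,
      hper.intervalIntegral_add_eq a 0, zero_add]
  have hsum : ∫ x in 0..T, (U x + U (x + a)) = ∫ x in 0..T, (2 * W x + 2 * g x) :=
    intervalIntegral.integral_congr fun x _ => hsym x
  have hint {f : ℝ → ℝ} (hf : Continuous f) : IntervalIntegrable f MeasureTheory.volume 0 T :=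
    hf.intervalIntegrable _ _
  rw [intervalIntegral.integral_add (hint hU) (hint (by fun_prop)),
    intervalIntegral.integral_add (hint (by fun_prop)) (hint (by fun_prop)),
    intervalIntegral.integral_const_mul, intervalIntegral.integral_const_mul, hshift, hg0] at hsum
  linarith

theorem integral_boundaryTerm_eq_zero_of_periodic {d A B : ℝ → ℝ} {T : ℝ}
    (hper : Periodic d T) (hd : ContDiff ℝ 2 d) (hA : ContDiff ℝ 1 A) (hB : ContDiff ℝ 1 B) :
    ∫ ψ in 0..T, (deriv (deriv d) ψ * A (d ψ) + deriv d ψ ^ 2 * deriv A (d ψ)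
      + 3 * deriv d ψ ^ 2 * deriv (deriv d) ψ * B (d ψ) + deriv d ψ ^ 4 * deriv B (d ψ)) = 0 := by
  have hd' : ContDiff ℝ 1 (deriv d) := hd.deriv'
  have hc := hd.continuous
  have hc' := hd'.continuous
  have hc'' := hd'.continuous_deriv_one
  have hcA := hA.continuous
  have hcB := hB.continuous
  have hcA' := hA.continuous_deriv_one
  have hcB' := hB.continuous_deriv_one
  have hG : ∀ ψ, HasDerivAt (fun ψ => deriv d ψ * A (d ψ) + deriv d ψ ^ 3 * B (d ψ))
      (deriv (deriv d) ψ * A (d ψ) + deriv d ψ ^ 2 * deriv A (d ψ)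
        + 3 * deriv d ψ ^ 2 * deriv (deriv d) ψ * B (d ψ) + deriv d ψ ^ 4 * deriv B (d ψ)) ψ := by
    intro ψ
    have hd1 := (hd.differentiable two_ne_zero ψ).hasDerivAt
    have hd2 := (hd'.differentiable one_ne_zero ψ).hasDerivAt
    have hA1 := ((hA.differentiable one_ne_zero (d ψ)).hasDerivAt).comp ψ hd1
    have hB1 := ((hB.differentiable one_ne_zero (d ψ)).hasDerivAt).comp ψ hd1
    refine ((hd2.fun_mul hA1).fun_add ((hd2.fun_pow 3).fun_mul hB1)).congr_deriv ?_
    simp only [comp_apply]; ring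
  have hGper : Periodic (fun ψ => deriv d ψ * A (d ψ) + deriv d ψ ^ 3 * B (d ψ)) T := fun ψ => by
    simp only [hper ψ, hper.deriv ψ]
  simpa only [zero_add] using hGper.integral_deriv_eq_zero hG (by fun_prop) 0

theorem deriv_const_mul_sin_comp {d : ℝ → ℝ} (hd : Differentiable ℝ d) (R : ℝ) :
    deriv (fun ψ => R * sin (d ψ)) = fun ψ => R * (cos (d ψ) * deriv d ψ) :=
  funext fun ψ => (((hd ψ).hasDerivAt.sin).const_mul R).deriv

theorem deriv_deriv_const_mul_sin_comp {d : ℝ → ℝ} (hd : Differentiable ℝ d)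
    (hd' : Differentiable ℝ (deriv d)) (R ψ : ℝ) :
    deriv (deriv fun ψ => R * sin (d ψ)) ψ
      = R * (cos (d ψ) * deriv (deriv d) ψ - sin (d ψ) * deriv d ψ ^ 2) := by
  rw [deriv_const_mul_sin_comp hd]
  refine ((((hd ψ).hasDerivAt.cos).fun_mul (hd' ψ).hasDerivAt).const_mul R).deriv.trans ?_
  ring

-- `U ψ = uIntegrand R (d ψ) (d' ψ) (d'' ψ)`, with `h, h', h''` expanded for `h = R sin ∘ d`.
noncomputable def uIntegrand (R x p q : ℝ) : ℝ :=
  -(R * sin x * (R * (cos x * p)) ^ 2 * (R * sin x + R * (cos x * q - sin x * p ^ 2)))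
      * (x / 2 - sin (2 * x) / 4)
    + (R * (cos x * q - sin x * p ^ 2) * (R * sin x) ^ 2
        + 3 * (R * sin x) * (R * (cos x * p)) ^ 2)
      * (R * sin x + R * (cos x * q - sin x * p ^ 2))
      * (x / 8 - sin (4 * x) / 32)

-- `U` is homogeneous of degree 4 in `(sin x, cos x)`, hence a polynomial in `sin 2x, cos 2x`;
-- in these variables `x ↦ π/2 - x` only flips the sign of `cos 2x`.
theorem uIntegrand_eq_double_angle (R x p q : ℝ) :
    uIntegrand R x p q = R ^ 4 / 4 *
      (-(p ^ 2 * (x / 2 - sin (2 * x) / 4)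
          * (sin (2 * x) ^ 2 * (1 - p ^ 2) + sin (2 * x) * (1 + cos (2 * x)) * q))
        + (x / 8 - sin (4 * x) / 32)
          * (sin (2 * x) ^ 2 * q ^ 2 + sin (2 * x) * (1 - cos (2 * x)) * q
            + sin (2 * x) * (1 + 5 * cos (2 * x)) * p ^ 2 * q
            + (3 * sin (2 * x) ^ 2 - (1 - cos (2 * x)) ^ 2) * p ^ 2 * (1 - p ^ 2))) := by
  unfold uIntegrand
  generalize x / 2 - sin (2 * x) / 4 = a
  generalize x / 8 - sin (4 * x) / 32 = b
  rw [sin_two_mul, cos_two_mul_eq_one_sub]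
  linear_combination R ^ 4 * sin x * cos x * p ^ 2 * q * (3 * b - a) * sin_sq_add_cos_sq x

-- The terms linear in `q` of `U ψ + U (ψ + π/2)` are `2 R⁴ (q A(x) + 3 p² q B(x))`.
noncomputable def boundaryA (x : ℝ) : ℝ :=
  sin (2 * x) * (4 * x - π - sin (4 * x) - π * cos (2 * x)) / 128

noncomputable def boundaryB (x : ℝ) : ℝ :=
  sin (2 * x) * (3 * π - 12 * x + 3 * sin (4 * x) + π * cos (2 * x)) / 384

theorem hasDerivAt_boundaryA (x : ℝ) : HasDerivAt boundaryA
    ((2 * cos (2 * x) * (4 * x - π - sin (4 * x) - π * cos (2 * x))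
      + sin (2 * x) * (4 - 4 * cos (4 * x) + 2 * π * sin (2 * x))) / 128) x := by
  have hmul (k : ℝ) : HasDerivAt (fun y => k * y) k x := by
    simpa using (hasDerivAt_id x).const_mul k
  have h2 := hmul 2
  have h4 := hmul 4
  refine ((h2.sin.fun_mul (((h4.sub_const π).fun_sub h4.sin).fun_sub
    (h2.cos.const_mul π))).div_const 128).congr_deriv ?_
  ring

theorem hasDerivAt_boundaryB (x : ℝ) : HasDerivAt boundaryB
    ((2 * cos (2 * x) * (3 * π - 12 * x + 3 * sin (4 * x) + π * cos (2 * x))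
      + sin (2 * x) * (12 * cos (4 * x) - 12 - 2 * π * sin (2 * x))) / 384) x := by
  have hmul (k : ℝ) : HasDerivAt (fun y => k * y) k x := by
    simpa using (hasDerivAt_id x).const_mul k
  have h2 := hmul 2
  have h4 := hmul 4
  have h12 := hmul 12
  refine ((h2.sin.fun_mul ((((h12.const_sub (3 * π)).fun_add (h4.sin.const_mul 3)).fun_add
    (h2.cos.const_mul π)))).div_const 384).congr_deriv ?_
  ring

theorem contDiff_boundaryA {n : WithTop ℕ∞} : ContDiff ℝ n boundaryA := by
  unfold boundaryA; fun_prop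

theorem contDiff_boundaryB {n : WithTop ℕ∞} : ContDiff ℝ n boundaryB := by
  unfold boundaryB; fun_prop

theorem uIntegrand_add_uIntegrand_pi_div_two_sub (R x p q : ℝ) :
    uIntegrand R x p q + uIntegrand R (π / 2 - x) (-p) (-q) =
      2 * (-(π * R ^ 4 / 32) * sin (2 * x) ^ 2 * p ^ 2
        + (π * R ^ 4 / 192) * (3 - cos (4 * x)) * p ^ 4
        + (π * R ^ 4 / 128) * sin (2 * x) ^ 2 * q ^ 2)
      + 2 * (R ^ 4 * (q * boundaryA x + p ^ 2 * deriv boundaryA x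
        + 3 * p ^ 2 * q * boundaryB x + p ^ 4 * deriv boundaryB x)) := by
  rw [uIntegrand_eq_double_angle, uIntegrand_eq_double_angle, (hasDerivAt_boundaryA x).deriv,
    (hasDerivAt_boundaryB x).deriv, boundaryA, boundaryB,
    show 2 * (π / 2 - x) = π - 2 * x by ring, show 4 * (π / 2 - x) = 2 * π - 4 * x by ring,
    sin_pi_sub, cos_pi_sub, sin_two_pi_sub, show 4 * x = 2 * (2 * x) by ring, sin_two_mul (2 * x),
    cos_two_mul' (2 * x)]
  linear_combination R ^ 4 * p ^ 2 * (π * (1 + p ^ 2) / 64 + sin (2 * x) * (1 - p ^ 2) / 16)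
    * sin_sq_add_cos_sq (2 * x)

theorem stmt_9_general (R : ℝ) (d : ℝ → ℝ) (hd : ContDiff ℝ 2 d)
    (hdsym : ∀ ψ : ℝ, d (ψ + Real.pi / 2) = Real.pi / 2 - d ψ)
    (h : ℝ → ℝ) (hh : h = fun ψ => R * Real.sin (d ψ))
    (U : ℝ → ℝ)
    (hU : ∀ ψ : ℝ, U ψ =
      -(h ψ * (deriv h ψ) ^ 2 * (h ψ + deriv (deriv h) ψ))
          * (d ψ / 2 - Real.sin (2 * d ψ) / 4)
        + (deriv (deriv h) ψ * (h ψ) ^ 2 + 3 * h ψ * (deriv h ψ) ^ 2)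
          * (h ψ + deriv (deriv h) ψ)
          * (d ψ / 8 - Real.sin (4 * d ψ) / 32))
    (W : ℝ → ℝ)
    (hW : ∀ ψ : ℝ, W ψ =
      -(Real.pi * R ^ 4 / 32) * Real.sin (2 * d ψ) ^ 2 * (deriv d ψ) ^ 2
        + (Real.pi * R ^ 4 / 192) * (3 - Real.cos (4 * d ψ)) * (deriv d ψ) ^ 4
        + (Real.pi * R ^ 4 / 128) * Real.sin (2 * d ψ) ^ 2 * (deriv (deriv d) ψ) ^ 2) :
    ∫ ψ in (0:ℝ)..Real.pi, U ψ = ∫ ψ in (0:ℝ)..Real.pi, W ψ := by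
  have hdiff : Differentiable ℝ d := hd.differentiable two_ne_zero
  have hd' : ContDiff ℝ 1 (deriv d) := hd.deriv'
  have hanti' : Antiperiodic (deriv d) (π / 2) := antiperiodic_deriv_of_add_eq_sub hdsym
  have hanti'' : Antiperiodic (deriv (deriv d)) (π / 2) := hanti'.deriv
  have hper : Periodic d π := fun ψ => by
    rw [show ψ + π = ψ + π / 2 + π / 2 by ring, hdsym, hdsym, sub_sub_cancel]
  have hper' : Periodic (deriv d) π := hper.deriv
  have hper'' : Periodic (deriv (deriv d)) π := hper'.deriv
  obtain rfl : U = fun ψ => uIntegrand R (d ψ) (deriv d ψ) (deriv (deriv d) ψ) := by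
    funext ψ
    rw [hU, hh, deriv_deriv_const_mul_sin_comp hdiff (hd'.differentiable one_ne_zero),
      deriv_const_mul_sin_comp hdiff]
    rfl
  obtain rfl : W = _ := funext hW
  have hc := hd.continuous
  have hc' := hd'.continuous
  have hc'' := hd'.continuous_deriv_one
  refine Periodic.integral_eq_of_add_shift_eq (a := π / 2) (g := fun ψ => R ^ 4 *
      (deriv (deriv d) ψ * boundaryA (d ψ) + deriv d ψ ^ 2 * deriv boundaryA (d ψ)
        + 3 * deriv d ψ ^ 2 * deriv (deriv d) ψ * boundaryB (d ψ)
        + deriv d ψ ^ 4 * deriv boundaryB (d ψ)))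
    (fun ψ => by simp only [hper ψ, hper' ψ, hper'' ψ]) (by unfold uIntegrand; fun_prop)
    (by fun_prop) (fun ψ => ?_) ?_
  · simp only [hdsym ψ, hanti' ψ, hanti'' ψ]
    exact uIntegrand_add_uIntegrand_pi_div_two_sub R (d ψ) _ _
  · rw [intervalIntegral.integral_const_mul,
      integral_boundaryTerm_eq_zero_of_periodic hper hd contDiff_boundaryA contDiff_boundaryB, mul_zero]

/-- Symmetrization and integration by parts: `∫₀^π U = ∫₀^π W`, where `W` has no terms
linear in `d''`. -/
theorem stmt_9 (R : ℝ) (hR : 0 < R) (d : ℝ → ℝ) (hd : ContDiff ℝ 2 d)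
    (hdsym : ∀ ψ : ℝ, d (ψ + Real.pi / 2) = Real.pi / 2 - d ψ)
    (h : ℝ → ℝ) (hh : h = fun ψ => R * Real.sin (d ψ))
    (U : ℝ → ℝ)
    (hU : ∀ ψ : ℝ, U ψ =
      -(h ψ * (deriv h ψ) ^ 2 * (h ψ + deriv (deriv h) ψ))
          * (d ψ / 2 - Real.sin (2 * d ψ) / 4)
        + (deriv (deriv h) ψ * (h ψ) ^ 2 + 3 * h ψ * (deriv h ψ) ^ 2)
          * (h ψ + deriv (deriv h) ψ)
          * (d ψ / 8 - Real.sin (4 * d ψ) / 32))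
    (W : ℝ → ℝ)
    (hW : ∀ ψ : ℝ, W ψ =
      -(Real.pi * R ^ 4 / 32) * Real.sin (2 * d ψ) ^ 2 * (deriv d ψ) ^ 2
        + (Real.pi * R ^ 4 / 192) * (3 - Real.cos (4 * d ψ)) * (deriv d ψ) ^ 4
        + (Real.pi * R ^ 4 / 128) * Real.sin (2 * d ψ) ^ 2 * (deriv (deriv d) ψ) ^ 2) :
    ∫ ψ in (0:ℝ)..Real.pi, U ψ = ∫ ψ in (0:ℝ)..Real.pi, W ψ :=
  stmt_9_general R d hd hdsym h hh U hU W hW
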